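/- Let k be a field, A and B Noetherian k-algebras with R = A ⊗_k B Noetherian, I ⊆ A, J ⊆ B ideals, and s ≥ 1 with I^{s-1} ≠ I^s and J^{s-1} ≠ J^s. If ᵃ(I+J)^(s) = (I+J)^s, then ᵃI^(i) = I^i and ᵃJ^(i) = J^i for all 1 ≤ i ≤ s. -/

import Mathlib

open TensorProduct Ideal

/-- Extension of an ideal of `A` to `A ⊗[k] B`. -/
noncomputable def extL (k : Type*) {A : Type*} (B : Type*) [Field k] [CommRing A] [CommRing B]
    [Algebra k A] [Algebra k B] (I : Ideal A) : Ideal (A ⊗[k] B) :=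
  I.map (Algebra.TensorProduct.includeLeft : A →ₐ[k] A ⊗[k] B)

/-- Extension of an ideal of `B` to `A ⊗[k] B`. -/
noncomputable def extR (k A : Type*) {B : Type*} [Field k] [CommRing A] [CommRing B]
    [Algebra k A] [Algebra k B] (J : Ideal B) : Ideal (A ⊗[k] B) :=
  J.map (Algebra.TensorProduct.includeRight : B →ₐ[k] A ⊗[k] B)

/-- Contraction to `C` of the extension of `I` to the localization at a prime `p`. -/
noncomputable def locContract {C : Type*} [CommRing C] (I p : Ideal C) [p.IsPrime] : Ideal C :=
  Ideal.comap (algebraMap C (Localization.AtPrime p))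
    (Ideal.map (algebraMap C (Localization.AtPrime p)) I)

/-- The "associated" symbolic power `ᵃI^(s) = ⋂_{p ∈ Ass(C/I)} (I^s C_p ∩ C)`. -/
noncomputable def assSymb {C : Type*} [CommRing C] (I : Ideal C) (s : ℕ) : Ideal C :=
  ⨅ p : {p : Ideal C // p ∈ associatedPrimes C (C ⧸ I)},
    haveI : p.1.IsPrime := p.2.1
    locContract (I ^ s) p.1

/-- The "minimal" symbolic power `ᵐI^(s) = ⋂_{p ∈ Min(I)} (I^s C_p ∩ C)`. -/
noncomputable def minSymb {C : Type*} [CommRing C] (I : Ideal C) (s : ℕ) : Ideal C :=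
  ⨅ p : {p : Ideal C // p ∈ I.minimalPrimes},
    haveI : p.1.IsPrime := p.2.1.1
    locContract (I ^ s) p.1

/-! ### Auxiliary lemmas -/

section Basic

variable {C C' : Type*} [CommRing C] [CommRing C']

lemma mem_locContract_iff (K p : Ideal C) [hp : p.IsPrime] (x : C) :
    x ∈ locContract K p ↔ ∃ u, u ∉ p ∧ u * x ∈ K := by
  rw [locContract, Ideal.mem_comap,
    IsLocalization.mem_map_algebraMap_iff p.primeCompl (Localization.AtPrime p)]
  constructor
  · rintro ⟨⟨⟨a, ha⟩, s⟩, hx⟩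
    rw [← _root_.map_mul, IsLocalization.eq_iff_exists p.primeCompl] at hx
    obtain ⟨c, hc⟩ := hx
    refine ⟨c * s, fun hmem => ?_, ?_⟩
    · exact (p.primeCompl.mul_mem c.2 s.2 : (c : C) * s ∈ p.primeCompl) hmem
    · have : (c : C) * s * x = c * a := by
        simp only at hc; linear_combination hc
      rw [this]
      exact K.mul_mem_left _ ha
  · rintro ⟨u, hu, hux⟩
    exact ⟨⟨⟨u * x, hux⟩, ⟨u, hu⟩⟩, by simp [← _root_.map_mul, mul_comm]⟩

lemma mem_assSymb_iff {K : Ideal C} {s : ℕ} {x : C} :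
    x ∈ assSymb K s ↔ ∀ p, p ∈ associatedPrimes C (C ⧸ K) → ∃ u, u ∉ p ∧ u * x ∈ K ^ s := by
  rw [assSymb, Submodule.mem_iInf]
  constructor
  · intro hx p hp
    haveI : p.IsPrime := hp.1
    exact (mem_locContract_iff (K ^ s) p x).mp (hx ⟨p, hp⟩)
  · rintro hx ⟨p, hp⟩
    haveI : p.IsPrime := hp.1
    exact (mem_locContract_iff (K ^ s) p x).mpr (hx p hp)

lemma pow_le_assSymb (K : Ideal C) (s : ℕ) :
    K ^ s ≤ assSymb K s := fun x hx => by
  rw [mem_assSymb_iff]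
  intro p hp
  haveI : p.IsPrime := hp.1
  exact ⟨1, (Ideal.ne_top_iff_one p).mp hp.1.ne_top, by simpa using hx⟩

lemma pow_chain (J : Ideal C) {m n : ℕ} (hmn : m ≤ n)
    (h : J ^ m = J ^ (m + 1)) : J ^ n = J ^ (n + 1) := by
  induction n, hmn using Nat.le_induction with
  | base => exact h
  | succ n hn ih => rw [pow_succ, ih, ← pow_succ]

lemma exists_pow_not_mem (J : Ideal C) {s i : ℕ} (hi : 1 ≤ i)
    (his : i ≤ s) (hJ : J ^ (s - 1) ≠ J ^ s) :
    ∃ y, y ∈ J ^ (s - i) ∧ y ∉ J ^ (s - i + 1) := by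
  have hne : J ^ (s - i) ≠ J ^ (s - i + 1) := by
    intro hEq
    apply hJ
    have := pow_chain J (show s - i ≤ s - 1 by omega) hEq
    rwa [show s - 1 + 1 = s by omega] at this
  have hle : J ^ (s - i + 1) ≤ J ^ (s - i) := Ideal.pow_le_pow_right (by omega)
  by_contra hcon
  push_neg at hcon
  exact hne (le_antisymm (fun y hy => hcon y hy) hle)

lemma sup_pow_le (K L : Ideal C) {i s : ℕ} (hi : 1 ≤ i) (his : i ≤ s) :
    (K + L) ^ s ≤ K ^ i + L ^ (s - i + 1) := by
  rw [add_pow]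
  refine Finset.sum_induction _ (fun T => T ≤ K ^ i + L ^ (s - i + 1))
    (fun a b ha hb => sup_le ha hb) (by simp) ?_
  intro m hm
  simp only [Finset.mem_range] at hm
  have h1 : K ^ m * L ^ (s - m) * (s.choose m : Ideal C) ≤ K ^ m * L ^ (s - m) :=
    Ideal.mul_le_left
  refine h1.trans ?_
  rcases le_or_gt i m with him | hmi
  · exact le_sup_of_le_left (Ideal.mul_le_left.trans (Ideal.pow_le_pow_right him))
  · exact le_sup_of_le_right (Ideal.mul_le_right.trans (Ideal.pow_le_pow_right (by omega)))

lemma smul_quotient_mk_eq (K : Ideal C) (r z : C) :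
    r • (Ideal.Quotient.mk K z) = Ideal.Quotient.mk K (r * z) := by
  rw [← Ideal.Quotient.mk_eq_mk, ← Ideal.Quotient.mk_eq_mk, ← Submodule.Quotient.mk_smul,
    smul_eq_mul]

lemma assocPrimes_comap_of_equiv (e : C ≃+* C') (K : Ideal C) (q : Ideal C')
    (hq : q ∈ associatedPrimes C' (C' ⧸ K.map (e : C →+* C'))) :
    q.comap (e : C →+* C') ∈ associatedPrimes C (C ⧸ K) := by
  obtain ⟨hq1, x', hx'⟩ := hq
  haveI : q.IsPrime := hq1
  obtain ⟨z', rfl⟩ := Ideal.Quotient.mk_surjective x'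
  refine ⟨Ideal.IsPrime.comap _, Ideal.Quotient.mk K (e.symm z'), ?_⟩
  ext a
  rw [Ideal.mem_comap, hx', Ideal.mem_radical_iff, Ideal.mem_radical_iff]
  refine exists_congr fun n => ?_
  rw [← map_pow (e : C →+* C') a n, Submodule.mem_colon_singleton, Submodule.mem_bot,
    Submodule.mem_colon_singleton, Submodule.mem_bot, smul_quotient_mk_eq, smul_quotient_mk_eq,
    Ideal.Quotient.eq_zero_iff_mem, Ideal.Quotient.eq_zero_iff_mem,
    Ideal.map_comap_of_equiv e, Ideal.mem_comap]
  have h5 : e.symm ((e : C →+* C') (a ^ n) * z') = a ^ n * e.symm z' := by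
    rw [_root_.map_mul]
    simp
  rw [h5]

lemma mem_assSymb_map_iff (e : C ≃+* C') (K : Ideal C) (s : ℕ) (x : C) :
    e x ∈ assSymb (K.map (e : C →+* C')) s ↔ x ∈ assSymb K s := by
  rw [mem_assSymb_iff, mem_assSymb_iff]
  constructor
  · intro hx p hp
    have hq : (p.comap (e.symm : C' →+* C)) ∈
        associatedPrimes C' (C' ⧸ (K.map (e : C →+* C'))) := by
      have := assocPrimes_comap_of_equiv e.symm (K.map (e : C →+* C')) p
        (by rwa [Ideal.map_of_equiv e])
      exact this
    obtain ⟨u', hu', hux'⟩ := hx _ hq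
    refine ⟨e.symm u', fun hmem => hu' ?_, ?_⟩
    · rw [Ideal.mem_comap]
      simpa using hmem
    · have : e (e.symm u' * x) ∈ (K.map (e : C →+* C')) ^ s := by
        rw [_root_.map_mul, e.apply_symm_apply]
        exact hux'
      rw [← Ideal.map_pow, Ideal.map_comap_of_equiv e, Ideal.mem_comap] at this
      simpa using this
  · intro hx q hq
    have hp := assocPrimes_comap_of_equiv e K q hq
    obtain ⟨u, hu, hux⟩ := hx _ hp
    refine ⟨e u, fun hmem => hu (Ideal.mem_comap.mpr hmem), ?_⟩
    rw [← _root_.map_mul, ← Ideal.map_pow]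
    exact Ideal.mem_map_of_mem _ hux

lemma assSymb_map_eq (e : C ≃+* C') (K : Ideal C) (s : ℕ) :
    assSymb (K.map (e : C →+* C')) s = (assSymb K s).map (e : C →+* C') := by
  ext x'
  rw [Ideal.map_comap_of_equiv (I := assSymb K s) e, Ideal.mem_comap]
  have := mem_assSymb_map_iff e K s (e.symm x')
  rwa [e.apply_symm_apply] at this

end Basic

section Tensor

variable {k A B : Type*} [Field k] [CommRing A] [CommRing B] [Algebra k A] [Algebra k B]

/-- The reduction map `A ⊗ B → (A/I) ⊗ (B/J)`. -/
noncomputable def redMap (I : Ideal A) (J : Ideal B) :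
    (A ⊗[k] B) →ₐ[k] ((A ⧸ I) ⊗[k] (B ⧸ J)) :=
  Algebra.TensorProduct.map (Ideal.Quotient.mkₐ k I) (Ideal.Quotient.mkₐ k J)

lemma mem_ker_redMap_iff (I : Ideal A) (J : Ideal B) (z : A ⊗[k] B) :
    redMap (k := k) I J z = 0 ↔ z ∈ extL k B I + extR k A J := by
  constructor
  · intro hz
    let T := (A ⊗[k] B) ⧸ (extL k B I + extR k A J)
    let ψ : (A ⊗[k] B) →ₐ[k] T := Ideal.Quotient.mkₐ k _
    have hIf : ∀ a ∈ I, ψ ((Algebra.TensorProduct.includeLeft : A →ₐ[k] A ⊗[k] B) a) = 0 := by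
      intro a ha
      rw [Ideal.Quotient.mkₐ_eq_mk, Ideal.Quotient.eq_zero_iff_mem]
      exact Ideal.add_eq_sup (J := extR k A J) ▸ Submodule.mem_sup_left
        (Ideal.mem_map_of_mem _ ha)
    have hJf : ∀ b ∈ J, ψ ((Algebra.TensorProduct.includeRight : B →ₐ[k] A ⊗[k] B) b) = 0 := by
      intro b hb
      rw [Ideal.Quotient.mkₐ_eq_mk, Ideal.Quotient.eq_zero_iff_mem]
      exact Ideal.add_eq_sup (I := extL k B I) ▸ Submodule.mem_sup_right
        (Ideal.mem_map_of_mem _ hb)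
    let f : (A ⧸ I) →ₐ[k] T := Ideal.Quotient.liftₐ I
      (ψ.comp (Algebra.TensorProduct.includeLeft : A →ₐ[k] A ⊗[k] B)) hIf
    let g : (B ⧸ J) →ₐ[k] T := Ideal.Quotient.liftₐ J
      (ψ.comp (Algebra.TensorProduct.includeRight : B →ₐ[k] A ⊗[k] B)) hJf
    let χ : ((A ⧸ I) ⊗[k] (B ⧸ J)) →ₐ[k] T := Algebra.TensorProduct.productMap f g
    have key : (χ.comp (redMap (k := k) I J)) = ψ := by
      apply Algebra.TensorProduct.ext
      · ext a
        simp [χ, redMap, f, Ideal.Quotient.liftₐ_apply]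
        exact Ideal.Quotient.lift_mk _ _ _
      · ext b
        simp [χ, redMap, g, Ideal.Quotient.liftₐ_apply]
        exact Ideal.Quotient.lift_mk _ _ _
    have : ψ z = 0 := by
      rw [← key]; simp [hz]
    rwa [Ideal.Quotient.mkₐ_eq_mk, Ideal.Quotient.eq_zero_iff_mem] at this
  · intro hz
    rw [Ideal.add_eq_sup] at hz
    have h1 : extL k B I ≤ RingHom.ker (redMap (k := k) I J) := by
      rw [extL, Ideal.map_le_iff_le_comap]
      intro a ha
      simp only [Ideal.mem_comap, RingHom.mem_ker, Algebra.TensorProduct.includeLeft_apply]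
      show redMap (k := k) I J (a ⊗ₜ 1) = 0
      rw [redMap, Algebra.TensorProduct.map_tmul]
      simp [Ideal.Quotient.eq_zero_iff_mem.mpr ha]
    have h2 : extR k A J ≤ RingHom.ker (redMap (k := k) I J) := by
      rw [extR, Ideal.map_le_iff_le_comap]
      intro b hb
      simp only [Ideal.mem_comap, RingHom.mem_ker, Algebra.TensorProduct.includeRight_apply]
      show redMap (k := k) I J (1 ⊗ₜ b) = 0
      rw [redMap, Algebra.TensorProduct.map_tmul]
      simp [Ideal.Quotient.eq_zero_iff_mem.mpr hb]
    exact (sup_le h1 h2) hz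

lemma comap_mem_associatedPrimes [IsNoetherianRing (A ⊗[k] B)] (I : Ideal A) (J : Ideal B)
    (P : Ideal (A ⊗[k] B))
    (hP : P ∈ associatedPrimes (A ⊗[k] B) ((A ⊗[k] B) ⧸ (extL k B I + extR k A J))) :
    Ideal.comap (algebraMap A (A ⊗[k] B)) P ∈ associatedPrimes A (A ⧸ I) := by
  obtain ⟨hPrime, z0, hann⟩ := (isAssociatedPrime_iff (I := P)).mp hP
  obtain ⟨z, rfl⟩ := Ideal.Quotient.mk_surjective z0
  haveI : P.IsPrime := hPrime
  set p' : Ideal A := Ideal.comap (algebraMap A (A ⊗[k] B)) P with hp'def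
  haveI hp' : p'.IsPrime := Ideal.IsPrime.comap _
  set M := A ⧸ I
  set N := B ⧸ J
  set ι := Module.Free.ChooseBasisIndex k N with hι
  let b : Module.Basis ι k N := Module.Free.chooseBasis k N
  let e : (M ⊗[k] N) ≃ₗ[k] (ι →₀ M) :=
    (TensorProduct.congr (LinearEquiv.refl k M) b.repr).trans
      (TensorProduct.finsuppScalarRight k k M ι)
  have he_tmul : ∀ (m : M) (n : N) (t : ι), e (m ⊗ₜ n) t = b.repr n t • m := by
    intro m n t
    simp [e, TensorProduct.congr_tmul, TensorProduct.finsuppScalarRight_apply_tmul_apply]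
  set ζ : M ⊗[k] N := redMap (k := k) I J z with hζ
  have hcompat : ∀ (a : A) (w : M ⊗[k] N) (t : ι),
      e (((Ideal.Quotient.mk I a) ⊗ₜ (1 : N)) * w) t = a • (e w t) := by
    intro a w t
    induction w using TensorProduct.induction_on with
    | zero => simp
    | tmul m n =>
        rw [Algebra.TensorProduct.tmul_mul_tmul, one_mul, he_tmul, he_tmul]
        simp only [Algebra.smul_def, Ideal.Quotient.algebraMap_eq]
        rw [show (algebraMap A M) a = Ideal.Quotient.mk I a from rfl]
        ring
    | add w₁ w₂ h₁ h₂ =>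
        simp only [mul_add, map_add, Finsupp.add_apply, h₁, h₂, smul_add]
  have hmem : ∀ a : A, a ∈ p' ↔ ∀ t : ι, a • (e ζ t) = 0 := by
    intro a
    have h1 : a ∈ p' ↔ (algebraMap A (A ⊗[k] B) a) •
        (Ideal.Quotient.mk (extL k B I + extR k A J) z) = 0 := by
      rw [hp'def, Ideal.mem_comap, hann, Submodule.mem_colon_singleton, Submodule.mem_bot]
    have h2 : (algebraMap A (A ⊗[k] B) a) • (Ideal.Quotient.mk (extL k B I + extR k A J) z)
        = Ideal.Quotient.mk (extL k B I + extR k A J) (algebraMap A (A ⊗[k] B) a * z) := by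
      rw [← Ideal.Quotient.mk_eq_mk, ← Ideal.Quotient.mk_eq_mk, ← Submodule.Quotient.mk_smul,
        smul_eq_mul]
    have h3 : redMap (k := k) I J (algebraMap A (A ⊗[k] B) a * z)
        = ((Ideal.Quotient.mk I a) ⊗ₜ (1 : N)) * ζ := by
      rw [_root_.map_mul]
      congr 1
    rw [h1, h2, Ideal.Quotient.eq_zero_iff_mem, ← mem_ker_redMap_iff I J, h3,
      ← LinearEquiv.map_eq_zero_iff e, Finsupp.ext_iff]
    exact forall_congr' fun t => by rw [hcompat, Finsupp.coe_zero, Pi.zero_apply]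
  have hsupp : p' = ((e ζ).support).inf (fun t => Submodule.colon ⊥ {e ζ t}) := by
    ext a
    rw [Submodule.mem_finsetInf]
    constructor
    · intro ha t _
      rw [Submodule.mem_colon_singleton, Submodule.mem_bot]
      exact (hmem a).mp ha t
    · intro ha
      rw [hmem]
      intro t
      by_cases ht : t ∈ (e ζ).support
      · exact (Submodule.mem_bot A).mp (Submodule.mem_colon_singleton.mp (ha t ht))
      · rw [Finsupp.notMem_support_iff.mp ht, smul_zero]
  obtain ⟨t, ht, hta⟩ := (Ideal.IsPrime.inf_le' hp').mp (le_of_eq hsupp.symm)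
  have hpe : p' = Submodule.colon ⊥ {e ζ t} := le_antisymm (hsupp ▸ Finset.inf_le ht) hta
  exact ⟨hp', e ζ t, by rw [← hpe, hp'.radical]⟩

lemma key_lemma [IsNoetherianRing (A ⊗[k] B)] (I : Ideal A) (J : Ideal B) (s i : ℕ) (hi1 : 1 ≤ i) (his : i ≤ s)
    (hJ : J ^ (s - 1) ≠ J ^ s)
    (h : assSymb (extL k B I + extR k A J) s = (extL k B I + extR k A J) ^ s) :
    assSymb I i ≤ I ^ i := by
  obtain ⟨y, hy1, hy2⟩ := exists_pow_not_mem J hi1 his hJ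
  intro x hx
  set K := extL k B I + extR k A J with hK
  have hzmem : (x ⊗ₜ[k] y : A ⊗[k] B) ∈ assSymb K s := by
    rw [mem_assSymb_iff]
    intro P hP
    have hpA := comap_mem_associatedPrimes I J P hP
    obtain ⟨u, hu, hux⟩ := mem_assSymb_iff.mp hx _ hpA
    refine ⟨algebraMap A (A ⊗[k] B) u, fun hmem => hu (Ideal.mem_comap.mpr hmem), ?_⟩
    have heq : algebraMap A (A ⊗[k] B) u * (x ⊗ₜ[k] y)
        = ((u * x) ⊗ₜ[k] (1 : B)) * ((1 : A) ⊗ₜ[k] y) := by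
      rw [Algebra.TensorProduct.algebraMap_apply, Algebra.TensorProduct.tmul_mul_tmul,
        Algebra.TensorProduct.tmul_mul_tmul]
      norm_num
    rw [heq]
    have h1 : ((u * x) ⊗ₜ[k] (1 : B)) ∈ (extL k B I) ^ i := by
      rw [extL, ← Ideal.map_pow]
      exact Ideal.mem_map_of_mem _ hux
    have h2 : ((1 : A) ⊗ₜ[k] y) ∈ (extR k A J) ^ (s - i) := by
      rw [extR, ← Ideal.map_pow]
      exact Ideal.mem_map_of_mem _ hy1
    have h3 : (extL k B I) ^ i * (extR k A J) ^ (s - i) ≤ K ^ s := by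
      calc (extL k B I) ^ i * (extR k A J) ^ (s - i)
          ≤ K ^ i * K ^ (s - i) :=
            Ideal.mul_mono (Ideal.pow_right_mono le_sup_left i)
              (Ideal.pow_right_mono le_sup_right (s - i))
        _ = K ^ s := by rw [← pow_add]; congr 1; omega
    exact h3 (Ideal.mul_mem_mul h1 h2)
  rw [h] at hzmem
  have hker : K ^ s ≤ RingHom.ker (redMap (k := k) (I ^ i) (J ^ (s - i + 1))) := by
    refine (sup_pow_le (extL k B I) (extR k A J) hi1 his).trans ?_
    rw [Ideal.add_eq_sup]
    refine sup_le ?_ ?_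
    · rw [extL, ← Ideal.map_pow, Ideal.map_le_iff_le_comap]
      intro a ha
      rw [Ideal.mem_comap, RingHom.mem_ker, mem_ker_redMap_iff, Ideal.add_eq_sup]
      exact Submodule.mem_sup_left (Ideal.mem_map_of_mem _ ha)
    · rw [extR, ← Ideal.map_pow, Ideal.map_le_iff_le_comap]
      intro b hb
      rw [Ideal.mem_comap, RingHom.mem_ker, mem_ker_redMap_iff, Ideal.add_eq_sup]
      exact Submodule.mem_sup_right (Ideal.mem_map_of_mem _ hb)
  have hzero : (Ideal.Quotient.mk (I ^ i) x) ⊗ₜ[k] (Ideal.Quotient.mk (J ^ (s - i + 1)) y)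
      = (0 : (A ⧸ I ^ i) ⊗[k] (B ⧸ J ^ (s - i + 1))) := by
    have := hker hzmem
    rw [RingHom.mem_ker] at this
    rw [← this, redMap, Algebra.TensorProduct.map_tmul]
    rfl
  by_contra hxmem
  set M' := A ⧸ I ^ i
  set N' := B ⧸ J ^ (s - i + 1)
  have hxne : (Ideal.Quotient.mk (I ^ i) x : M') ≠ 0 :=
    fun h0 => hxmem (Ideal.Quotient.eq_zero_iff_mem.mp h0)
  have hyne : (Ideal.Quotient.mk (J ^ (s - i + 1)) y : N') ≠ 0 :=
    fun h0 => hy2 (Ideal.Quotient.eq_zero_iff_mem.mp h0)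
  set b' : Module.Basis (Module.Free.ChooseBasisIndex k N') k N' := Module.Free.chooseBasis k N'
  have hrepr : b'.repr (Ideal.Quotient.mk (J ^ (s - i + 1)) y) ≠ 0 := by
    intro h0
    apply hyne
    have := congrArg b'.repr.symm h0
    simpa using this
  obtain ⟨t, ht⟩ := Finsupp.ne_iff.mp hrepr
  rw [Finsupp.coe_zero, Pi.zero_apply] at ht
  have happ := congrArg
    ((TensorProduct.rid k M').toLinearMap.comp (LinearMap.lTensor M' (b'.coord t))) hzero
  simp only [LinearMap.comp_apply, LinearMap.lTensor_tmul, map_zero,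
    LinearEquiv.coe_toLinearMap, TensorProduct.rid_tmul, Module.Basis.coord_apply] at happ
  exact hxne ((smul_eq_zero.mp happ).resolve_left ht)

end Tensor

/-- If `I^{s-1} ≠ I^s`, `J^{s-1} ≠ J^s` and `ᵃ(I+J)^(s) = (I+J)^s` in `R = A ⊗[k] B`,
then `ᵃI^(i) = Iⁱ` and `ᵃJ^(i) = Jⁱ` for all `1 ≤ i ≤ s`. -/
theorem assSymb_eq_power_converse {k A B : Type*} [Field k] [CommRing A]
    [CommRing B] [Algebra k A] [Algebra k B] [IsNoetherianRing A] [IsNoetherianRing B]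
    [IsNoetherianRing (A ⊗[k] B)]
    (I : Ideal A) (J : Ideal B) (s : ℕ) (hs : 1 ≤ s)
    (hI : I ^ (s - 1) ≠ I ^ s) (hJ : J ^ (s - 1) ≠ J ^ s)
    (h : assSymb (extL k B I + extR k A J) s = (extL k B I + extR k A J) ^ s) :
    ∀ i, 1 ≤ i → i ≤ s → assSymb I i = I ^ i ∧ assSymb J i = J ^ i := by
  intro i hi1 his
  constructor
  · exact le_antisymm (key_lemma I J s i hi1 his hJ h) (pow_le_assSymb I i)
  · -- transport along the commutativity isomorphism
    let e : (A ⊗[k] B) ≃+* (B ⊗[k] A) := (Algebra.TensorProduct.comm k A B).toRingEquiv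
    haveI : IsNoetherianRing (B ⊗[k] A) := isNoetherianRing_of_ringEquiv (A ⊗[k] B) e
    have hL : (extL k B I).map (e : (A ⊗[k] B) →+* (B ⊗[k] A)) = extR k B I := by
      apply le_antisymm
      · rw [Ideal.map_le_iff_le_comap, extL, Ideal.map_le_iff_le_comap]
        intro a ha
        rw [Ideal.mem_comap, Ideal.mem_comap]
        have : (e : (A ⊗[k] B) →+* (B ⊗[k] A))
            ((Algebra.TensorProduct.includeLeft : A →ₐ[k] A ⊗[k] B) a) = (1 : B) ⊗ₜ[k] a := by
          simp [e, Algebra.TensorProduct.comm_tmul]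
        rw [this]
        exact Ideal.mem_map_of_mem _ ha
      · rw [extR, Ideal.map_le_iff_le_comap]
        intro a ha
        rw [Ideal.mem_comap]
        have : ((Algebra.TensorProduct.includeRight : A →ₐ[k] B ⊗[k] A) a)
            = (e : (A ⊗[k] B) →+* (B ⊗[k] A)) (a ⊗ₜ[k] (1 : B)) := by
          simp [e, Algebra.TensorProduct.comm_tmul]
        rw [this]
        exact Ideal.mem_map_of_mem _
          (show (a ⊗ₜ[k] (1 : B)) ∈ extL k B I from Ideal.mem_map_of_mem _ ha)
    have hR : (extR k A J).map (e : (A ⊗[k] B) →+* (B ⊗[k] A)) = extL k A J := by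
      apply le_antisymm
      · rw [Ideal.map_le_iff_le_comap, extR, Ideal.map_le_iff_le_comap]
        intro b hb
        rw [Ideal.mem_comap, Ideal.mem_comap]
        have : (e : (A ⊗[k] B) →+* (B ⊗[k] A))
            ((Algebra.TensorProduct.includeRight : B →ₐ[k] A ⊗[k] B) b) = b ⊗ₜ[k] (1 : A) := by
          simp [e, Algebra.TensorProduct.comm_tmul]
        rw [this]
        exact Ideal.mem_map_of_mem _ hb
      · rw [extL, Ideal.map_le_iff_le_comap]
        intro b hb
        rw [Ideal.mem_comap]
        have : ((Algebra.TensorProduct.includeLeft : B →ₐ[k] B ⊗[k] A) b)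
            = (e : (A ⊗[k] B) →+* (B ⊗[k] A)) ((1 : A) ⊗ₜ[k] b) := by
          simp [e, Algebra.TensorProduct.comm_tmul]
        rw [this]
        exact Ideal.mem_map_of_mem _
          (show ((1 : A) ⊗ₜ[k] b) ∈ extR k A J from Ideal.mem_map_of_mem _ hb)
    have hsum : (extL k B I + extR k A J).map (e : (A ⊗[k] B) →+* (B ⊗[k] A))
        = extL k A J + extR k B I := by
      rw [Ideal.add_eq_sup, Ideal.map_sup, hL, hR, Ideal.add_eq_sup, sup_comm]
    have h' : assSymb (extL k A J + extR k B I) s = (extL k A J + extR k B I) ^ s := by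
      rw [← hsum, assSymb_map_eq, h, Ideal.map_pow]
    exact le_antisymm (key_lemma (k := k) J I s i hi1 his hI h') (pow_le_assSymb J i)
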